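/- The groups W₆⁺ (signed 6×6 permutation matrices of determinant 1) and W₆' (signed 6×6 permutation matrices with evenly many sign changes, the type D₆ Weyl group) are not isomorphic. -/

import Mathlib

noncomputable section
open Matrix Complex

/-- The signed permutation matrix with underlying permutation `σ` and signs `a`. -/
def sp (σ : Equiv.Perm (Fin 6)) (a : Fin 6 → ℂ) : Matrix (Fin 6) (Fin 6) ℂ :=
  Matrix.of fun i j => if i = σ j then a j else 0

/-- All entries are `±1`. -/
def signs (a : Fin 6 → ℂ) : Prop := ∀ k, a k = 1 ∨ a k = -1

/-- The Weyl group of type `B₆`: all signed permutation matrices. -/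
def W6Set : Set (GL (Fin 6) ℂ) :=
  {g | ∃ σ a, signs a ∧ (g : Matrix (Fin 6) (Fin 6) ℂ) = sp σ a}

/-- `W₆⁺`: signed permutation matrices of determinant 1. -/
def W6plusSet : Set (GL (Fin 6) ℂ) :=
  {g | ∃ σ a, signs a ∧ (g : Matrix (Fin 6) (Fin 6) ℂ) = sp σ a ∧
    (g : Matrix (Fin 6) (Fin 6) ℂ).det = 1}

/-- `W₆'` (type `D₆`): signed permutation matrices with product of entries 1. -/
def W6'Set : Set (GL (Fin 6) ℂ) :=
  {g | ∃ σ a, signs a ∧ (∏ k, a k) = 1 ∧ (g : Matrix (Fin 6) (Fin 6) ℂ) = sp σ a}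

/-- `A₆'`: diagonal sign matrices with product of entries 1. -/
def A6'Set : Set (GL (Fin 6) ℂ) :=
  {g | ∃ a, signs a ∧ (∏ k, a k) = 1 ∧ (g : Matrix (Fin 6) (Fin 6) ℂ) = Matrix.diagonal a}

/-- `i · Id` as an element of `GL₆(ℂ)`. -/
def iId : GL (Fin 6) ℂ :=
  ⟨Matrix.diagonal (fun _ => Complex.I), Matrix.diagonal (fun _ => -Complex.I),
    by simp [Matrix.diagonal_mul_diagonal, Complex.I_mul_I],
    by simp [Matrix.diagonal_mul_diagonal, Complex.I_mul_I]⟩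

/-- For a monomial matrix, the product of its nonzero entries (γ). -/
def gam (m : Matrix (Fin 6) (Fin 6) ℂ) : ℂ := ∏ j, ∑ i, m i j

/-- `𝒲₆ = ⟨W₆⁺, i·Id⟩`. -/
def CW6Sub : Subgroup (GL (Fin 6) ℂ) := Subgroup.closure (W6plusSet ∪ {iId})

/-- `𝒲₆' = 𝒲₆ ∩ ker γ`. -/
def CW6'Set : Set (GL (Fin 6) ℂ) :=
  {g | g ∈ CW6Sub ∧ gam (g : Matrix (Fin 6) (Fin 6) ℂ) = 1}

def CW6'Sub : Subgroup (GL (Fin 6) ℂ) := Subgroup.closure CW6'Set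

def W6Sub : Subgroup (GL (Fin 6) ℂ) := Subgroup.closure W6Set
def W6plusSub : Subgroup (GL (Fin 6) ℂ) := Subgroup.closure W6plusSet
def W6'Sub : Subgroup (GL (Fin 6) ℂ) := Subgroup.closure W6'Set

/-! The two groups are told apart by their numbers of involutions. An element `sp σ ε` squares
to `1` iff `σ² = 1` and `ε` is constant on the 2-cycles of `σ`; then `∏ ε` is the product of `ε`
over the fixed points of `σ`. Over the fifteen fixed-point-free involutions `σ` this gives `120`
involutions of `W₆'`, but none of `W₆⁺`, since there `det = sign σ · ∏ ε = -1`. Elsewhere the two conditions cut out equally many sign vectors,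
so `W₆'` has `752` involutions and `W₆⁺` only `632`. -/

lemma MulEquiv.card_mul_self_eq_one {G H : Type*} [MulOneClass G] [MulOneClass H] (e : G ≃* H) :
    Nat.card {g : G // g * g = 1} = Nat.card {h : H // h * h = 1} :=
  Nat.card_congr <| e.toEquiv.subtypeEquiv fun g => by
    rw [← e.map_eq_one_iff, map_mul]; rfl

lemma sp_mul (σ τ : Equiv.Perm (Fin 6)) (a b : Fin 6 → ℂ) :
    sp σ a * sp τ b = sp (σ * τ) (fun j => a (τ j) * b j) := by
  ext i j
  simp only [sp, mul_apply, of_apply, Equiv.Perm.mul_apply, ite_mul, zero_mul]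
  rw [Finset.sum_eq_single (τ j)] <;> simp +contextual
  rfl

lemma sp_one : sp 1 1 = 1 := by
  ext i j
  simp [sp, one_apply]
  rfl

lemma sp_eq_permMatrix_mul_diagonal (σ : Equiv.Perm (Fin 6)) (a : Fin 6 → ℂ) :
    sp σ a = σ⁻¹.permMatrix ℂ * diagonal a := by
  ext i j
  simp only [sp, of_apply, mul_diagonal, Equiv.Perm.permMatrix, PEquiv.toMatrix_apply,
    Equiv.toPEquiv_apply, Option.mem_some_iff, ite_mul, one_mul, zero_mul, Equiv.Perm.inv_def,
    Equiv.symm_apply_eq]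

lemma det_sp (σ : Equiv.Perm (Fin 6)) (a : Fin 6 → ℂ) :
    (sp σ a).det = Equiv.Perm.sign σ * ∏ k, a k := by
  rw [sp_eq_permMatrix_mul_diagonal, det_mul, det_permutation, det_diagonal, Equiv.Perm.sign_inv]

lemma sp_injective {σ τ : Equiv.Perm (Fin 6)} {a b : Fin 6 → ℂ} (hb : ∀ j, b j ≠ 0)
    (h : sp σ a = sp τ b) : σ = τ ∧ a = b := by
  have hστ : σ = τ := Equiv.ext fun j => by
    by_contra hne
    have := congr_fun₂ h (τ j) j
    simp only [sp, of_apply, if_neg (Ne.symm hne)] at this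
    exact hb j this.symm
  subst hστ
  exact ⟨rfl, funext fun j => by simpa [sp] using congr_fun₂ h (σ j) j⟩

def signVec (ε : Fin 6 → ℤˣ) : Fin 6 → ℂ := fun j => ((ε j : ℤ) : ℂ)

lemma signs_iff_exists_signVec {a : Fin 6 → ℂ} : signs a ↔ ∃ ε, signVec ε = a := by
  constructor
  · intro ha
    refine ⟨fun j => if a j = 1 then 1 else -1, funext fun j => ?_⟩
    rcases ha j with h | h <;> simp [signVec, h, (by norm_num : (-1 : ℂ) ≠ 1)]
  · rintro ⟨ε, rfl⟩ j
    rcases Int.units_eq_one_or (ε j) with h | h <;> simp [signVec, h]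

lemma signVec_ne_zero (ε : Fin 6 → ℤˣ) (j : Fin 6) : signVec ε j ≠ 0 := by
  simp [signVec]

lemma signVec_injective : Function.Injective signVec := fun _ _ h =>
  funext fun j => Units.ext <| Int.cast_injective (α := ℂ) (congr_fun h j)

lemma signVec_mul (ε δ : Fin 6 → ℤˣ) (j : Fin 6) :
    signVec ε j * signVec δ j = signVec (ε * δ) j := by
  simp [signVec]

lemma prod_signVec (ε : Fin 6 → ℤˣ) : ∏ j, signVec ε j = (((∏ j, ε j : ℤˣ) : ℤ) : ℂ) := by
  simp [signVec]

lemma det_sp_signVec (σ : Equiv.Perm (Fin 6)) (ε : Fin 6 → ℤˣ) :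
    (sp σ (signVec ε)).det = (((Equiv.Perm.sign σ * ∏ j, ε j : ℤˣ) : ℤ) : ℂ) := by
  simp [det_sp, prod_signVec]

def signedPerm (σ : Equiv.Perm (Fin 6)) (ε : Fin 6 → ℤˣ) : GL (Fin 6) ℂ :=
  GeneralLinearGroup.mkOfDetNeZero (sp σ (signVec ε)) <| by
    rw [det_sp_signVec]; exact Int.cast_ne_zero.mpr (Units.ne_zero _)

@[simp]
lemma coe_signedPerm (σ : Equiv.Perm (Fin 6)) (ε : Fin 6 → ℤˣ) :
    (signedPerm σ ε : Matrix (Fin 6) (Fin 6) ℂ) = sp σ (signVec ε) :=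
  rfl

lemma signedPerm_mul (σ τ : Equiv.Perm (Fin 6)) (ε δ : Fin 6 → ℤˣ) :
    signedPerm σ ε * signedPerm τ δ = signedPerm (σ * τ) (fun j => ε (τ j) * δ j) := by
  ext1
  simp only [Units.val_mul, coe_signedPerm, sp_mul]
  congr 1
  funext j
  exact signVec_mul (ε ∘ τ) δ j

lemma signedPerm_one : signedPerm 1 1 = 1 := by
  ext1
  rw [coe_signedPerm, Units.val_one, ← sp_one]
  congr
  funext j
  simp [signVec]

lemma signedPerm_inj {σ τ : Equiv.Perm (Fin 6)} {ε δ : Fin 6 → ℤˣ} :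
    signedPerm σ ε = signedPerm τ δ ↔ σ = τ ∧ ε = δ := by
  refine ⟨fun h => ?_, fun ⟨hστ, hεδ⟩ => hστ ▸ hεδ ▸ rfl⟩
  obtain ⟨hστ, hεδ⟩ := sp_injective (signVec_ne_zero δ) (congr_arg Units.val h)
  exact ⟨hστ, signVec_injective hεδ⟩

lemma signedPerm_inv (σ : Equiv.Perm (Fin 6)) (ε : Fin 6 → ℤˣ) :
    (signedPerm σ ε)⁻¹ = signedPerm σ⁻¹ (fun j => ε (σ⁻¹ j)) := by
  refine (eq_inv_of_mul_eq_one_left ?_).symm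
  rw [signedPerm_mul, ← signedPerm_one, signedPerm_inj]
  simp [funext_iff, Int.units_mul_self]

lemma signedPerm_mul_self_eq_one_iff (σ : Equiv.Perm (Fin 6)) (ε : Fin 6 → ℤˣ) :
    signedPerm σ ε * signedPerm σ ε = 1 ↔ σ * σ = 1 ∧ ∀ j, ε (σ j) = ε j := by
  rw [signedPerm_mul, ← signedPerm_one, signedPerm_inj, funext_iff]
  simp [mul_eq_one_iff_eq_inv, Int.units_inv_eq_self]

section SignedPermKer

-- `hχ` says that `signedPerm σ ε ↦ χ σ ε` is a character of the hyperoctahedral group.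
variable (χ : Equiv.Perm (Fin 6) → (Fin 6 → ℤˣ) → ℤˣ)
  (hχ : ∀ σ τ ε δ, χ (σ * τ) (fun j => ε (τ j) * δ j) = χ σ ε * χ τ δ)

include hχ in
lemma map_one_of_twisted_mul : χ 1 1 = 1 := by
  have h := hχ 1 1 1 1
  simp only [mul_one] at h
  exact left_eq_mul.mp h

include hχ in
lemma map_inv_of_twisted_mul (σ : Equiv.Perm (Fin 6)) (ε : Fin 6 → ℤˣ) :
    χ σ⁻¹ (fun j => ε (σ⁻¹ j)) = (χ σ ε)⁻¹ := by
  rw [eq_inv_iff_mul_eq_one, ← hχ, ← map_one_of_twisted_mul χ hχ]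
  simp [Int.units_mul_self]
  rfl

def signedPermKer : Subgroup (GL (Fin 6) ℂ) where
  carrier := {g | ∃ σ ε, χ σ ε = 1 ∧ g = signedPerm σ ε}
  one_mem' := ⟨1, 1, map_one_of_twisted_mul χ hχ, signedPerm_one.symm⟩
  mul_mem' := by
    rintro _ _ ⟨σ, ε, hσε, rfl⟩ ⟨τ, δ, hτδ, rfl⟩
    exact ⟨σ * τ, _, by rw [hχ, hσε, hτδ, one_mul], signedPerm_mul σ τ ε δ⟩
  inv_mem' := by
    rintro _ ⟨σ, ε, hσε, rfl⟩
    exact ⟨σ⁻¹, _, by rw [map_inv_of_twisted_mul χ hχ, hσε, inv_one], signedPerm_inv σ ε⟩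

lemma closure_eq_signedPermKer {S : Set (GL (Fin 6) ℂ)}
    (hS : ∀ g, g ∈ S ↔ ∃ σ ε, χ σ ε = 1 ∧ g = signedPerm σ ε) :
    Subgroup.closure S = signedPermKer χ hχ := by
  rw [← Subgroup.closure_eq (signedPermKer χ hχ)]
  congr 1
  ext g
  exact hS g

open Finset in
lemma card_involutions_signedPermKer :
    Nat.card {g : signedPermKer χ hχ // g * g = 1} =
      ∑ σ : Equiv.Perm (Fin 6),
        if σ * σ = 1 then #{ε | (∀ j, ε (σ j) = ε j) ∧ χ σ ε = 1} else 0 := by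
  let f : {p : Equiv.Perm (Fin 6) × (Fin 6 → ℤˣ) //
      (p.1 * p.1 = 1 ∧ ∀ j, p.2 (p.1 j) = p.2 j) ∧ χ p.1 p.2 = 1} →
      {g : signedPermKer χ hχ // g * g = 1} := fun p =>
    ⟨⟨signedPerm p.1.1 p.1.2, p.1.1, p.1.2, p.2.2, rfl⟩,
      Subtype.ext ((signedPerm_mul_self_eq_one_iff _ _).2 p.2.1)⟩
  have hf : Function.Bijective f := by
    constructor
    · rintro ⟨⟨σ, ε⟩, _⟩ ⟨⟨τ, δ⟩, _⟩ h
      obtain ⟨rfl, rfl⟩ := signedPerm_inj.1 (congr_arg (fun g => g.1.1) h)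
      rfl
    · rintro ⟨⟨_, σ, ε, hσε, rfl⟩, hg⟩
      exact ⟨⟨(σ, ε), (signedPerm_mul_self_eq_one_iff σ ε).1 (congr_arg Subtype.val hg), hσε⟩, rfl⟩
  rw [← Nat.card_congr (Equiv.ofBijective f hf), Nat.card_eq_fintype_card, Fintype.card_subtype,
    card_filter, Fintype.sum_prod_type]
  refine sum_congr rfl fun σ _ => ?_
  split_ifs with hσ <;> simp [hσ]

end SignedPermKer

lemma prod_twisted_mul (τ : Equiv.Perm (Fin 6)) (ε δ : Fin 6 → ℤˣ) :
    ∏ j, ε (τ j) * δ j = (∏ j, ε j) * ∏ j, δ j := by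
  rw [Finset.prod_mul_distrib, Equiv.prod_comp]

lemma mem_W6'Set_iff {g : GL (Fin 6) ℂ} :
    g ∈ W6'Set ↔ ∃ σ ε, ∏ j, ε j = 1 ∧ g = signedPerm σ ε := by
  constructor
  · rintro ⟨σ, a, ha, hprod, hg⟩
    obtain ⟨ε, rfl⟩ := signs_iff_exists_signVec.1 ha
    rw [prod_signVec] at hprod
    exact ⟨σ, ε, Units.val_eq_one.1 (by exact_mod_cast hprod), Units.ext hg⟩
  · rintro ⟨σ, ε, hε, rfl⟩
    exact ⟨σ, signVec ε, signs_iff_exists_signVec.2 ⟨ε, rfl⟩, by simp [prod_signVec, hε], rfl⟩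

lemma mem_W6plusSet_iff {g : GL (Fin 6) ℂ} :
    g ∈ W6plusSet ↔ ∃ σ ε, Equiv.Perm.sign σ * ∏ j, ε j = 1 ∧ g = signedPerm σ ε := by
  constructor
  · rintro ⟨σ, a, ha, hg, hdet⟩
    obtain ⟨ε, rfl⟩ := signs_iff_exists_signVec.1 ha
    rw [hg, det_sp_signVec] at hdet
    exact ⟨σ, ε, Units.val_eq_one.1 (by exact_mod_cast hdet), Units.ext hg⟩
  · rintro ⟨σ, ε, hε, rfl⟩
    exact ⟨σ, signVec ε, signs_iff_exists_signVec.2 ⟨ε, rfl⟩, rfl, by simp [det_sp_signVec, hε]⟩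

lemma W6'Sub_eq : W6'Sub = signedPermKer (fun _ ε => ∏ j, ε j)
    (fun _ τ ε δ => prod_twisted_mul τ ε δ) :=
  closure_eq_signedPermKer _ _ fun _ => mem_W6'Set_iff

lemma W6plusSub_eq : W6plusSub = signedPermKer (fun σ ε => Equiv.Perm.sign σ * ∏ j, ε j)
    (fun σ τ ε δ => by rw [Equiv.Perm.sign_mul, prod_twisted_mul, mul_mul_mul_comm]) :=
  closure_eq_signedPermKer _ _ fun _ => mem_W6plusSet_iff

set_option maxRecDepth 100000 in
lemma card_involutions_W6'Sub : Nat.card {g : W6'Sub // g * g = 1} = 752 := by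
  rw [W6'Sub_eq, card_involutions_signedPermKer]
  decide +kernel

set_option maxRecDepth 100000 in
lemma card_involutions_W6plusSub : Nat.card {g : W6plusSub // g * g = 1} = 632 := by
  rw [W6plusSub_eq, card_involutions_signedPermKer]
  decide +kernel

/-- The groups `W₆⁺` (signed permutation matrices of determinant 1) and `W₆'`
(type `D₆` Weyl group) are not isomorphic. -/
theorem stmt_13 : IsEmpty (↥W6plusSub ≃* ↥W6'Sub) := by
  refine ⟨fun e => ?_⟩
  have h := e.card_mul_self_eq_one
  rw [card_involutions_W6plusSub, card_involutions_W6'Sub] at h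
  exact absurd h (by decide)
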